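/- Let d ≥ 1, let Ω ⊆ [0,1]^d be open, and let h ∈ BV(Ω) with h ≥ 0 and ∫ h dm = 1. Then there exists a constant C_η > 0, depending only on η and d, such that for every δ > 0 and all x, y ∈ ℝ^d, h_δ(x) ≤ exp(C_η ‖h‖_{BV(Ω)} δ^{-d-1} ‖x − y‖) h_δ(y). -/

import Mathlib

open MeasureTheory Set Filter Topology
open scoped ENNReal NNReal Classical

noncomputable section

namespace Liverani

/-- The divergence of a vector field on `ℝ^d`. -/
def divg {d : ℕ} (φ : (Fin d → ℝ) → (Fin d → ℝ)) (x : Fin d → ℝ) : ℝ :=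
  ∑ j, fderiv ℝ φ x (Pi.single j 1) j

/-- Test vector fields: `C¹`, compactly supported, sup-norm `≤ 1`. -/
def IsTest (d : ℕ) (φ : (Fin d → ℝ) → (Fin d → ℝ)) : Prop :=
  ContDiff ℝ 1 φ ∧ HasCompactSupport φ ∧ ∀ x, ‖φ x‖ ≤ 1

/-- The BV seminorm on `ℝ^d`, extended-real valued. -/
def bvNormE {d : ℕ} (h : (Fin d → ℝ) → ℝ) : ℝ≥0∞ :=
  ⨆ φ : {φ : (Fin d → ℝ) → (Fin d → ℝ) // IsTest d φ},
    ENNReal.ofReal (∫ x, h x * divg φ.1 x)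

/-- The BV seminorm, real valued. -/
def bvNorm {d : ℕ} (h : (Fin d → ℝ) → ℝ) : ℝ := (bvNormE h).toReal

/-- Membership in `BV(ℝ^d)`. -/
def MemBV {d : ℕ} (h : (Fin d → ℝ) → ℝ) : Prop :=
  Integrable h volume ∧ bvNormE h < ⊤

/-- The BV seminorm on a set `Ω` (of the extension of `h` by zero), extended-real valued. -/
def bvNormOnE {d : ℕ} (Ω : Set (Fin d → ℝ)) (h : (Fin d → ℝ) → ℝ) : ℝ≥0∞ :=
  bvNormE (Ω.indicator h)

/-- The BV norm on a set `Ω`. -/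
def bvNormOn {d : ℕ} (Ω : Set (Fin d → ℝ)) (h : (Fin d → ℝ) → ℝ) : ℝ :=
  bvNorm (Ω.indicator h)

/-- Membership in `BV(Ω)`: the extension by zero belongs to `BV(ℝ^d)`. -/
def MemBVOn {d : ℕ} (Ω : Set (Fin d → ℝ)) (h : (Fin d → ℝ) → ℝ) : Prop :=
  MemBV (Ω.indicator h)

/-- One-dimensional BV seminorm (for slices). -/
def bvNorm1E (g : ℝ → ℝ) : ℝ≥0∞ :=
  ⨆ φ : {φ : ℝ → ℝ // ContDiff ℝ 1 φ ∧ HasCompactSupport φ ∧ ∀ y, |φ y| ≤ 1},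
    ENNReal.ofReal (∫ y, g y * deriv φ.1 y)

/-- The matrix norm `‖A‖_∞ = max_i Σ_j |A i j|`. -/
def matNorm {d : ℕ} (A : Matrix (Fin d) (Fin d) ℝ) : ℝ :=
  NNReal.toReal (Finset.univ.sup fun i => ∑ j, ‖A i j‖₊)

/-- The Jacobian matrix `DT` of a map `T` computed via `fderiv`. -/
def jac {d : ℕ} (T : (Fin d → ℝ) → (Fin d → ℝ)) (x : Fin d → ℝ) :
    Matrix (Fin d) (Fin d) ℝ :=
  Matrix.of fun i j => fderiv ℝ T x (Pi.single j 1) i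

/-- The inverse Jacobian matrix `(DT)⁻¹`. -/
def jacInv {d : ℕ} (T : (Fin d → ℝ) → (Fin d → ℝ)) (x : Fin d → ℝ) :
    Matrix (Fin d) (Fin d) ℝ :=
  (jac T x)⁻¹

/-- Entrywise partial derivative `∂_{x_j} (DT)⁻¹` of the inverse Jacobian along the
`j`-th coordinate. -/
def jacDj {d : ℕ} (T : (Fin d → ℝ) → (Fin d → ℝ)) (j : Fin d) (z : Fin d → ℝ) :
    Matrix (Fin d) (Fin d) ℝ :=
  Matrix.of fun i i' => deriv (fun y => jacInv T (Function.update z j y) i i') (z j)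

/-- The transfer operator `(L h)(x) = Σ_{y ∈ Ω ∩ T⁻¹{x}} |det D_y T|⁻¹ h(y)`. -/
def transferOp {d : ℕ} (Ω : Set (Fin d → ℝ)) (T : (Fin d → ℝ) → (Fin d → ℝ))
    (h : (Fin d → ℝ) → ℝ) (x : Fin d → ℝ) : ℝ :=
  ∑' y : ↥(Ω ∩ T ⁻¹' {x}), |(jac T y).det|⁻¹ * h y

/-- `Ω_k^ε`, the part of `U` at distance at least `ε` from its boundary. -/
def innerPart {d : ℕ} (U : Set (Fin d → ℝ)) (ε : ℝ) : Set (Fin d → ℝ) :=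
  {x ∈ U | ε ≤ Metric.infDist x (frontier U)}

/-- `∂^ε Ω_k`, the `ε`-boundary layer of `U`. -/
def bLayer {d : ℕ} (U : Set (Fin d → ℝ)) (ε : ℝ) : Set (Fin d → ℝ) :=
  U \ innerPart U ε

/-- `Γ_ε = ∪_k ∂^ε Ω_k`. -/
def Gam {d : ℕ} (parts : ℕ → Set (Fin d → ℝ)) (ε : ℝ) : Set (Fin d → ℝ) :=
  ⋃ k, bLayer (parts k) ε

/-- A piecewise expanding system: the data `Ω, T, {Ω_k}, {I_{k,ℓ}}, δ, λ` together with
hypotheses (H0)–(H5). -/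
structure PES (d : ℕ) where
  Ω : Set (Fin d → ℝ)
  T : (Fin d → ℝ) → (Fin d → ℝ)
  parts : ℕ → Set (Fin d → ℝ)
  Ifam : Fin d → (Fin d → ℝ) → ℕ → ℕ → Set ℝ
  δ : ℝ
  lam : ℝ
  Ω_open : IsOpen Ω
  Ω_subset : Ω ⊆ Set.Icc 0 1
  T_maps : Set.MapsTo T Ω (closure Ω)
  /-- (H0) -/
  h0 : ∀ n : ℕ, volume (T^[n] ⁻¹' frontier Ω) = 0
  /-- (H1) -/
  parts_open : ∀ k, IsOpen (parts k)
  parts_conn : ∀ k, IsPreconnected (parts k)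
  parts_disj : Pairwise (Function.onFun Disjoint parts)
  parts_union : ⋃ k, parts k = Ω
  T_C2 : ∀ k, ContDiffOn ℝ 2 T (parts k)
  T_inv : ∀ k, ∃ S : (Fin d → ℝ) → (Fin d → ℝ),
    ContDiffOn ℝ 1 S (T '' parts k) ∧ ∀ x ∈ parts k, S (T x) = x
  /-- (H2): continuous extension of `T` to the closure of each `Ω_k` -/
  h2T : ∀ k, ∃ g : (Fin d → ℝ) → (Fin d → ℝ),
    ContinuousOn g (closure (parts k)) ∧ Set.EqOn g T (parts k)
  /-- (H2): continuous extension of `(DT)⁻¹` to the closure of each `Ω_k` -/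
  h2D : ∀ k, ∃ G : (Fin d → ℝ) → Matrix (Fin d) (Fin d) ℝ,
    ContinuousOn G (closure (parts k)) ∧ Set.EqOn G (jacInv T) (parts k)
  /-- (H3): the slice structure -/
  δ_pos : 0 < δ
  lam_gt_one : 1 < lam
  Ifam_indep : ∀ (j : Fin d) (x x' : Fin d → ℝ) (k ℓ : ℕ),
    (∀ i, i ≠ j → x i = x' i) → Ifam j x k ℓ = Ifam j x' k ℓ
  Ifam_open : ∀ j x k ℓ, IsOpen (Ifam j x k ℓ)
  Ifam_conn : ∀ j x k ℓ, IsPreconnected (Ifam j x k ℓ)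
  Ifam_disj : ∀ j x k, Pairwise (Function.onFun Disjoint (Ifam j x k))
  Ifam_union : ∀ j x k, {y : ℝ | Function.update x j y ∈ parts k} = ⋃ ℓ, Ifam j x k ℓ
  h3 : ∀ x ∈ Set.Icc (0 : Fin d → ℝ) 1, ∀ j : Fin d,
    (∑' p : ℕ × ℕ,
      if (Set.Icc (x j - δ) (x j + δ) ∩ Ifam j x p.1 p.2).Nonempty then
        ⨆ y ∈ Ifam j x p.1 p.2,
          ENNReal.ofReal (matNorm (jacInv T (Function.update x j y)))
      else 0) ≤ ENNReal.ofReal lam⁻¹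
  /-- (H4) -/
  h4 : ∀ j : Fin d,
    Filter.Tendsto (fun ε : ℝ =>
      ⨆ x : Fin d → ℝ, ∑' k : ℕ, ∫⁻ y in Set.Icc (0:ℝ) 1,
        Set.indicator (bLayer (parts k) ε)
          (fun z => ENNReal.ofReal (matNorm (jacDj T j z)))
          (Function.update x j y))
      (nhdsWithin 0 (Set.Ioi 0)) (nhds 0)
  /-- (H5) -/
  h5 : ∀ i j k : Fin d,
    MeasureTheory.IntegrableOn (fun x => jac T x k j * jacInv T x j i) Ω volume

/-- A piecewise expanding system satisfying in addition hypothesis (H6). -/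
structure PES6 (d : ℕ) extends PES d where
  Cb : ℝ
  αb : ℝ
  ab : ℝ
  Cb_pos : 0 < Cb
  αb_mem : αb ∈ Set.Ioc (0:ℝ) 1
  ab_ge_one : 1 ≤ ab
  /-- (H6): measure of the boundary layers -/
  h6a : ∀ ε : ℝ, 0 < ε →
    volume (⋃ k, bLayer (parts k) ε) ≤ ENNReal.ofReal (Cb ^ d * ε ^ αb)
  /-- (H6): blow-up of `∇ det DT` near the singularities -/
  h6b : ∀ x ∈ Ω, ∀ i : Fin d,
    |fderiv ℝ (fun z => (jac T z).det) x (Pi.single i 1)| ≤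
      Cb * Metric.infDist x (frontier Ω) ^ (-ab)

/-- `μ` is a `T`-invariant probability measure, absolutely continuous w.r.t. Lebesgue,
supported in `Ω`. -/
def InvariantMeasure {d : ℕ} (Ω : Set (Fin d → ℝ)) (T : (Fin d → ℝ) → (Fin d → ℝ))
    (μ : Measure (Fin d → ℝ)) : Prop :=
  IsProbabilityMeasure μ ∧ μ ≪ volume ∧ μ Ωᶜ = 0 ∧
    ∀ A : Set (Fin d → ℝ), MeasurableSet A → μ (T ⁻¹' A) = μ A

/-- `μ` is an ergodic absolutely continuous invariant probability measure. -/
def ErgodicACIM {d : ℕ} (Ω : Set (Fin d → ℝ)) (T : (Fin d → ℝ) → (Fin d → ℝ))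
    (μ : Measure (Fin d → ℝ)) : Prop :=
  InvariantMeasure Ω T μ ∧
    ∀ A : Set (Fin d → ℝ), MeasurableSet A → T ⁻¹' A = A → μ A = 0 ∨ μ A = 1

/-- `h` is a density of `μ` with respect to Lebesgue measure. -/
def IsDensity {d : ℕ} (μ : Measure (Fin d → ℝ)) (h : (Fin d → ℝ) → ℝ) : Prop :=
  ∀ A : Set (Fin d → ℝ), MeasurableSet A → μ A = ∫⁻ x in A, ENNReal.ofReal (h x) ∂volume

/-- The system `(T, μ)` is mixing. -/
def Mixing {d : ℕ} (T : (Fin d → ℝ) → (Fin d → ℝ)) (μ : Measure (Fin d → ℝ)) : Prop :=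
  ∀ A B : Set (Fin d → ℝ), MeasurableSet A → MeasurableSet B →
    Tendsto (fun n : ℕ => μ (T^[n] ⁻¹' A ∩ B)) atTop (𝓝 (μ A * μ B))

/-- A one-dimensional mollifier. -/
def IsMollifier (η : ℝ → ℝ) : Prop :=
  ContDiff ℝ (⊤ : ℕ∞) η ∧ (∀ y, 0 ≤ η y) ∧ Function.support η ⊆ Set.Icc (-1) 1 ∧ ∫ y, η y = 1

/-- The product mollifier `η̄_δ(x) = δ^{-d} Π_i η(δ⁻¹ x_i)`. -/
def moll (d : ℕ) (η : ℝ → ℝ) (δ : ℝ) (x : Fin d → ℝ) : ℝ :=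
  (δ ^ d)⁻¹ * ∏ i, η (δ⁻¹ * x i)

/-- The regularization `h_δ(x) = ∫_Ω η̄_δ(x-y) h(y) dy + δ`. -/
def mollify (d : ℕ) (η : ℝ → ℝ) (Ω : Set (Fin d → ℝ)) (h : (Fin d → ℝ) → ℝ)
    (δ : ℝ) (x : Fin d → ℝ) : ℝ :=
  (∫ y in Ω, moll d η δ (x - y) * h y) + δ

/-- `ν₀ = ‖(DT)⁻¹‖_{L∞(Ω)}`. -/
def nu0 {d : ℕ} (Ω : Set (Fin d → ℝ)) (T : (Fin d → ℝ) → (Fin d → ℝ)) : ℝ :=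
  (essSup (fun x => ENNReal.ofReal (matNorm (jacInv T x))) (volume.restrict Ω)).toReal

/-- The truncated ("open") transfer operators
`L̃_{ε,n} = L_{ε,0} ⋯ L_{ε,n-1}` where `L_{ε,k} f = L((1 - 1_{Γ_{ε ν^k}}) f)`. -/
def tildeOp {d : ℕ} (Ω : Set (Fin d → ℝ)) (T : (Fin d → ℝ) → (Fin d → ℝ))
    (parts : ℕ → Set (Fin d → ℝ)) (ν : ℝ) :
    ℕ → ℝ → ((Fin d → ℝ) → ℝ) → (Fin d → ℝ) → ℝ
  | 0, _, f => f
  | n + 1, ε, f => transferOp Ω T (((Gam parts ε)ᶜ).indicator (tildeOp Ω T parts ν n (ε * ν) f))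


section Aux

variable {d : ℕ}

lemma bvNorm_nonneg (h : (Fin d → ℝ) → ℝ) : 0 ≤ bvNorm h := ENNReal.toReal_nonneg

lemma integral_le_bvNorm {h : (Fin d → ℝ) → ℝ} (hh : MemBV h)
    {φ : (Fin d → ℝ) → (Fin d → ℝ)} (hφ : IsTest d φ) :
    ∫ x, h x * divg φ x ≤ bvNorm h := by
  rcases le_or_gt (∫ x, h x * divg φ x) 0 with h0 | h0
  · exact h0.trans (bvNorm_nonneg h)
  · have h2 : ENNReal.ofReal (∫ x, h x * divg φ x) ≤ bvNormE h :=
      le_iSup (fun ψ : {ψ : (Fin d → ℝ) → (Fin d → ℝ) // IsTest d ψ} =>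
        ENNReal.ofReal (∫ x, h x * divg ψ.1 x)) ⟨φ, hφ⟩
    calc ∫ x, h x * divg φ x = (ENNReal.ofReal (∫ x, h x * divg φ x)).toReal :=
          (ENNReal.toReal_ofReal h0.le).symm
      _ ≤ bvNorm h := ENNReal.toReal_mono hh.2.ne h2

lemma divg_const_smul {φ : (Fin d → ℝ) → (Fin d → ℝ)} (hφ : Differentiable ℝ φ) (c : ℝ)
    (x : Fin d → ℝ) : divg (fun z => c • φ z) x = c * divg φ x := by
  unfold divg
  rw [Finset.mul_sum]
  refine Finset.sum_congr rfl fun j _ => ?_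
  rw [fderiv_fun_const_smul (hφ x) c]
  simp

lemma integral_le_bvNorm_smul {h : (Fin d → ℝ) → ℝ} (hh : MemBV h)
    {φ : (Fin d → ℝ) → (Fin d → ℝ)} (h1 : ContDiff ℝ 1 φ) (h2 : HasCompactSupport φ)
    {M : ℝ} (hM : 0 < M) (hb : ∀ x, ‖φ x‖ ≤ M) :
    ∫ x, h x * divg φ x ≤ M * bvNorm h := by
  have hφd : Differentiable ℝ φ := h1.differentiable one_ne_zero
  have htest : IsTest d (fun z => M⁻¹ • φ z) := by
    refine ⟨h1.const_smul _, h2.mono (Function.support_const_smul_subset M⁻¹ φ), fun z => ?_⟩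
    rw [norm_smul]
    calc ‖M⁻¹‖ * ‖φ z‖ ≤ M⁻¹ * M := by
          refine mul_le_mul ?_ (hb z) (norm_nonneg _) (inv_nonneg.2 hM.le)
          rw [Real.norm_eq_abs, abs_of_nonneg (inv_nonneg.2 hM.le)]
      _ = 1 := inv_mul_cancel₀ hM.ne'
  have hle := integral_le_bvNorm hh htest
  have heq : ∫ x, h x * divg (fun z => M⁻¹ • φ z) x = M⁻¹ * ∫ x, h x * divg φ x := by
    simp_rw [divg_const_smul hφd, mul_left_comm _ M⁻¹, integral_const_mul]
  rw [heq] at hle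
  calc ∫ x, h x * divg φ x = M * (M⁻¹ * ∫ x, h x * divg φ x) := by
        field_simp
    _ ≤ M * bvNorm h := mul_le_mul_of_nonneg_left hle hM.le

lemma moll_nonneg (η : ℝ → ℝ) (hη : IsMollifier η) {δ : ℝ} (hδ : 0 < δ) (x : Fin d → ℝ) :
    0 ≤ moll d η δ x :=
  mul_nonneg (inv_nonneg.2 (pow_nonneg hδ.le d)) (Finset.prod_nonneg fun i _ => hη.2.1 _)

lemma moll_contDiff (η : ℝ → ℝ) (hη : IsMollifier η) (δ : ℝ) :
    ContDiff ℝ (⊤ : ℕ∞) (moll d η δ) := by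
  unfold moll
  refine contDiff_const.mul ?_
  refine contDiff_prod fun i _ => ?_
  exact hη.1.comp (contDiff_const.mul ((ContinuousLinearMap.proj i :
    (Fin d → ℝ) →L[ℝ] ℝ).contDiff))

lemma moll_hcs (η : ℝ → ℝ) (hη : IsMollifier η) {δ : ℝ} (hδ : 0 < δ) :
    HasCompactSupport (moll d η δ) := by
  refine HasCompactSupport.intro (isCompact_Icc (a := fun _ : Fin d => -δ)
    (b := fun _ : Fin d => δ)) ?_
  intro x hx
  by_contra hmoll
  apply hx
  have hprod : ∀ i : Fin d, η (δ⁻¹ * x i) ≠ 0 := by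
    intro i
    have hne : (∏ i, η (δ⁻¹ * x i)) ≠ 0 := by
      intro h0
      exact hmoll (by unfold moll; rw [h0, mul_zero])
    exact Finset.prod_ne_zero_iff.1 hne i (Finset.mem_univ i)
  have hmem : ∀ i : Fin d, δ⁻¹ * x i ∈ Set.Icc (-1 : ℝ) 1 := fun i =>
    hη.2.2.1 (Function.mem_support.2 (hprod i))
  constructor
  · intro i
    have h1 := (hmem i).1
    have := mul_le_mul_of_nonneg_left h1 hδ.le
    simp only [mul_neg, mul_one] at this
    calc -δ ≤ δ * (δ⁻¹ * x i) := by linarith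
      _ = x i := by field_simp
  · intro i
    have h1 := (hmem i).2
    have := mul_le_mul_of_nonneg_left h1 hδ.le
    calc x i = δ * (δ⁻¹ * x i) := by field_simp
      _ ≤ δ := by simpa using this

lemma moll_le (η : ℝ → ℝ) (hη : IsMollifier η) {δ : ℝ} (hδ : 0 < δ) {B : ℝ}
    (hBb : ∀ y, η y ≤ B) (hB0 : 0 ≤ B) (x : Fin d → ℝ) :
    moll d η δ x ≤ (δ ^ d)⁻¹ * B ^ d := by
  unfold moll
  refine mul_le_mul_of_nonneg_left ?_ (inv_nonneg.2 (pow_nonneg hδ.le d))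
  calc ∏ i, η (δ⁻¹ * x i) ≤ ∏ _i : Fin d, B :=
        Finset.prod_le_prod (fun i _ => hη.2.1 _) (fun i _ => hBb _)
    _ = B ^ d := by simp

end Aux

set_option maxHeartbeats 1000000 in
theorem statement13 {d : ℕ} (hd : 1 ≤ d) (η : ℝ → ℝ) (hη : IsMollifier η) :
    ∃ C > (0:ℝ), ∀ Ω : Set (Fin d → ℝ), IsOpen Ω → Ω ⊆ Set.Icc 0 1 →
      ∀ h : (Fin d → ℝ) → ℝ, MemBVOn Ω h → (∀ x, 0 ≤ h x) →
        (∫ x in Ω, h x = 1) → ∀ δ : ℝ, 0 < δ → ∀ x y : Fin d → ℝ,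
        mollify d η Ω h δ x ≤
          Real.exp (C * bvNormOn Ω h * (δ ^ (d + 1))⁻¹ * dist x y) *
            mollify d η Ω h δ y := by
  classical
  have hηhcs : HasCompactSupport η :=
    HasCompactSupport.intro (isCompact_Icc (a := (-1:ℝ)) (b := 1))
      (fun y hy => by
        by_contra h0
        exact hy (hη.2.2.1 (Function.mem_support.2 h0)))
  obtain ⟨B₀, hB₀⟩ := hη.1.continuous.bounded_above_of_compact_support hηhcs
  set B : ℝ := max B₀ 1 with hBdef
  have hB1 : (1:ℝ) ≤ B := le_max_right _ _
  have hB0 : (0:ℝ) ≤ B := zero_le_one.trans hB1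
  have hBb : ∀ y, η y ≤ B := fun y =>
    ((le_abs_self _).trans (hB₀ y)).trans (le_max_left _ _)
  refine ⟨B ^ d, pow_pos (lt_of_lt_of_le one_pos hB1) d, ?_⟩
  intro Ω hΩo hΩs h hBV hpos hint δ hδ x y
  set hb : (Fin d → ℝ) → ℝ := Ω.indicator h with hbdef
  have hbint : Integrable hb volume := hBV.1
  have hbloc : LocallyIntegrable hb volume := hbint.locallyIntegrable
  set L : ℝ →L[ℝ] ℝ →L[ℝ] ℝ := ContinuousLinearMap.mul ℝ ℝ with hLdef
  have hmollCD : ContDiff ℝ (⊤ : ℕ∞) (moll d η δ) := moll_contDiff η hη δ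
  have hmollCD1 : ContDiff ℝ 1 (moll d η δ) := hmollCD.of_le (by simp)
  have hmollHCS : HasCompactSupport (moll d η δ) := moll_hcs η hη hδ
  set g : (Fin d → ℝ) → ℝ := convolution hb (moll d η δ) L volume with hgdef
  set D : (Fin d → ℝ) → ((Fin d → ℝ) →L[ℝ] ℝ) :=
    convolution hb (fderiv ℝ (moll d η δ)) (L.precompR (Fin d → ℝ)) volume with hDdef
  have hgD : ∀ z, HasFDerivAt g (D z) z := fun z =>
    hmollHCS.hasFDerivAt_convolution_right L hbloc hmollCD1 z
  set Mδ : ℝ := (δ ^ d)⁻¹ * B ^ d with hMδdef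
  have hMδ : 0 < Mδ := mul_pos (inv_pos.2 (pow_pos hδ d)) (pow_pos (lt_of_lt_of_le one_pos hB1) d)
  have hDapp : ∀ z v, D z v = ∫ t, hb t * ((fderiv ℝ (moll d η δ) (z - t)) v) := by
    intro z v
    rw [hDdef, convolution_precompR_apply L hbloc (hmollHCS.fderiv ℝ)
      (hmollCD.continuous_fderiv (by simp)) z v, convolution_def]
    simp [hLdef]
  have hkey : ∀ z (v : Fin d → ℝ) (t : Fin d → ℝ),
      divg (fun t => moll d η δ (z - t) • v) t = -((fderiv ℝ (moll d η δ) (z - t)) v) := by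
    intro z v t
    have hinner : HasFDerivAt (fun t : Fin d → ℝ => z - t)
        (-(ContinuousLinearMap.id ℝ (Fin d → ℝ))) t := by
      simpa using (hasFDerivAt_id (𝕜 := ℝ) t).const_sub z
    have hc : HasFDerivAt (fun t : Fin d → ℝ => moll d η δ (z - t))
        (-(fderiv ℝ (moll d η δ) (z - t))) t := by
      have hcomp := ((hmollCD1.differentiable one_ne_zero) (z - t)).hasFDerivAt.comp t hinner
      refine hcomp.congr_fderiv ?_
      ext w
      simp
    have hv : v = ∑ j, v j • (Pi.single j 1 : Fin d → ℝ) := by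
      funext i
      rw [Finset.sum_apply]
      simp [Pi.single_apply]
    have hfd : fderiv ℝ (fun t : Fin d → ℝ => moll d η δ (z - t) • v) t
        = (-(fderiv ℝ (moll d η δ) (z - t))).smulRight v := by
      rw [fderiv_smul_const hc.differentiableAt v, hc.fderiv]
    unfold divg
    rw [hfd]
    have hDv : (fderiv ℝ (moll d η δ) (z - t)) v
        = ∑ j, v j * (fderiv ℝ (moll d η δ) (z - t)) (Pi.single j 1) := by
      conv_lhs => rw [hv]
      rw [map_sum]
      simp [smul_eq_mul]
    rw [hDv, ← Finset.sum_neg_distrib]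
    refine Finset.sum_congr rfl fun j _ => ?_
    simp [smul_eq_mul]
    ring
  have hMb : ∀ z (v : Fin d → ℝ), ‖D z v‖ ≤ (Mδ * bvNorm hb) * ‖v‖ := by
    intro z v
    have claim : ∀ w : Fin d → ℝ, -(D z w) ≤ (Mδ * bvNorm hb) * ‖w‖ := by
      intro w
      rcases eq_or_ne w 0 with rfl | hw
      · simp
      · set φ₀ : (Fin d → ℝ) → (Fin d → ℝ) := fun t => moll d η δ (z - t) • w with hφ₀def
        have hφc : ContDiff ℝ 1 φ₀ :=
          (hmollCD1.comp (contDiff_const.sub contDiff_id)).smul contDiff_const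
        have hφs : HasCompactSupport φ₀ := by
          have h1 : HasCompactSupport (fun t => moll d η δ (z - t)) :=
            hmollHCS.comp_homeomorph (Homeomorph.subLeft z)
          refine h1.mono fun t ht => ?_
          simp only [Function.mem_support] at ht ⊢
          intro h0
          exact ht (by rw [hφ₀def]; simp [h0])
        have hφb : ∀ t, ‖φ₀ t‖ ≤ Mδ * ‖w‖ := by
          intro t
          rw [hφ₀def]
          dsimp only
          rw [norm_smul]
          refine mul_le_mul ?_ le_rfl (norm_nonneg w) hMδ.le
          rw [Real.norm_eq_abs, abs_of_nonneg (moll_nonneg η hη hδ _)]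
          exact moll_le η hη hδ hBb hB0 _
        have hMw : 0 < Mδ * ‖w‖ := mul_pos hMδ (norm_pos_iff.2 hw)
        have hI : ∫ t, hb t * divg φ₀ t ≤ (Mδ * ‖w‖) * bvNorm hb :=
          integral_le_bvNorm_smul hBV hφc hφs hMw hφb
        have hIeq : ∫ t, hb t * divg φ₀ t = -(D z w) := by
          rw [hDapp z w, ← integral_neg]
          refine integral_congr_ae (Filter.Eventually.of_forall fun t => ?_)
          show hb t * divg φ₀ t = -(hb t * (fderiv ℝ (moll d η δ) (z - t)) w)
          rw [hφ₀def, hkey z w t]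
          ring
        rw [hIeq] at hI
        calc -(D z w) ≤ (Mδ * ‖w‖) * bvNorm hb := hI
          _ = (Mδ * bvNorm hb) * ‖w‖ := by ring
    rw [Real.norm_eq_abs, abs_le]
    constructor
    · have := claim v
      linarith
    · have := claim (-v)
      rw [map_neg, neg_neg, norm_neg] at this
      linarith
  have hDnorm : ∀ z, ‖D z‖ ≤ Mδ * bvNorm hb := fun z =>
    ContinuousLinearMap.opNorm_le_bound _ (mul_nonneg hMδ.le (bvNorm_nonneg hb)) (hMb z)
  have hlip : ‖g x - g y‖ ≤ (Mδ * bvNorm hb) * ‖x - y‖ :=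
    convex_univ.norm_image_sub_le_of_norm_hasFDerivWithin_le
      (fun z _ => (hgD z).hasFDerivWithinAt) (fun z _ => hDnorm z)
      (Set.mem_univ y) (Set.mem_univ x)
  have hrepr : ∀ z, mollify d η Ω h δ z = g z + δ := by
    intro z
    unfold mollify
    congr 1
    rw [← integral_indicator hΩo.measurableSet, hgdef, convolution_def]
    refine integral_congr_ae (Filter.Eventually.of_forall fun t => ?_)
    by_cases ht : t ∈ Ω
    · simp [hbdef, Set.indicator_of_mem ht, mul_comm, hLdef]
    · simp [hbdef, Set.indicator_of_notMem ht, hLdef]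
  have hge : ∀ z, δ ≤ mollify d η Ω h δ z := by
    intro z
    unfold mollify
    have h0 : 0 ≤ ∫ t in Ω, moll d η δ (z - t) * h t :=
      setIntegral_nonneg hΩo.measurableSet fun t _ =>
        mul_nonneg (moll_nonneg η hη hδ _) (hpos t)
    linarith
  set K : ℝ := Mδ * bvNorm hb with hKdef
  have hK0 : 0 ≤ K := mul_nonneg hMδ.le (bvNorm_nonneg hb)
  have h1 : mollify d η Ω h δ x ≤ mollify d η Ω h δ y + K * dist x y := by
    rw [hrepr x, hrepr y, dist_eq_norm]
    have h2 : g x - g y ≤ K * ‖x - y‖ := (le_abs_self _).trans (by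
      rw [← Real.norm_eq_abs]; exact hlip)
    linarith
  have hbvOn : bvNormOn Ω h = bvNorm hb := rfl
  set E : ℝ := B ^ d * bvNormOn Ω h * (δ ^ (d + 1))⁻¹ * dist x y with hEdef
  have hE0 : 0 ≤ E := by
    rw [hEdef, hbvOn]
    have := bvNorm_nonneg hb
    positivity
  have hEeq : K * dist x y = E * δ := by
    rw [hKdef, hEdef, hbvOn, hMδdef, pow_succ]
    have hδd : (δ : ℝ) ^ d ≠ 0 := (pow_pos hδ d).ne'
    field_simp
  have hmolly : δ ≤ mollify d η Ω h δ y := hge y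
  have hmolly0 : 0 ≤ mollify d η Ω h δ y := hδ.le.trans hmolly
  calc mollify d η Ω h δ x ≤ mollify d η Ω h δ y + K * dist x y := h1
    _ = mollify d η Ω h δ y + E * δ := by rw [hEeq]
    _ ≤ mollify d η Ω h δ y + E * mollify d η Ω h δ y := by nlinarith
    _ = (1 + E) * mollify d η Ω h δ y := by ring
    _ ≤ Real.exp E * mollify d η Ω h δ y := by
        refine mul_le_mul_of_nonneg_right ?_ hmolly0
        have := Real.add_one_le_exp E
        linarith

end Liverani
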